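/- Let G be a complex symmetric d×d matrix with G = Q(I + iΛ)Q*, Q invertible, Λ real diagonal. Suppose λ_min(Re(G^{-1})) ≥ B > 0, σ_max(Im(G^{-1})) ≤ C < ∞, and λ_max(Re(G^{-1})) ≤ D < ∞. Then λ_min(Re G) ≥ 1/((1 + (C/B)²)·D) > 0. -/

import Mathlib

open Matrix
open scoped RealInnerProductSpace

/-- The largest singular value (spectral norm) of a real square matrix. -/
noncomputable def sigmaMaxR {n : ℕ} (A : Matrix (Fin n) (Fin n) ℝ) : ℝ :=
  ‖Matrix.toEuclideanCLM (𝕜 := ℝ) (n := Fin n) A‖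

/-- The smallest singular value of a real square matrix. -/
noncomputable def sigmaMinR {n : ℕ} (A : Matrix (Fin n) (Fin n) ℝ) : ℝ :=
  ⨅ x : Metric.sphere (0 : EuclideanSpace ℝ (Fin n)) 1,
    ‖Matrix.toEuclideanCLM (𝕜 := ℝ) (n := Fin n) A (x : EuclideanSpace ℝ (Fin n))‖

/-- The smallest eigenvalue of a real symmetric matrix (as min of Rayleigh quotient). -/
noncomputable def lambdaMinR {n : ℕ} (M : Matrix (Fin n) (Fin n) ℝ) : ℝ :=
  ⨅ x : Metric.sphere (0 : EuclideanSpace ℝ (Fin n)) 1,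
    ⟪Matrix.toEuclideanCLM (𝕜 := ℝ) (n := Fin n) M (x : EuclideanSpace ℝ (Fin n)),
      (x : EuclideanSpace ℝ (Fin n))⟫

/-- The largest eigenvalue of a real symmetric matrix (as max of Rayleigh quotient). -/
noncomputable def lambdaMaxR {n : ℕ} (M : Matrix (Fin n) (Fin n) ℝ) : ℝ :=
  ⨆ x : Metric.sphere (0 : EuclideanSpace ℝ (Fin n)) 1,
    ⟪Matrix.toEuclideanCLM (𝕜 := ℝ) (n := Fin n) M (x : EuclideanSpace ℝ (Fin n)),
      (x : EuclideanSpace ℝ (Fin n))⟫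

namespace LambdaMinAux

open scoped ComplexConjugate

variable {d : ℕ}

lemma clm_apply (M : Matrix (Fin d) (Fin d) ℝ) (x : EuclideanSpace ℝ (Fin d)) :
    Matrix.toEuclideanCLM (𝕜 := ℝ) (n := Fin d) M x =
      (WithLp.equiv 2 (Fin d → ℝ)).symm (M *ᵥ (WithLp.equiv 2 (Fin d → ℝ) x)) := by
  have := Matrix.coe_toEuclideanCLM_eq_toEuclideanLin (𝕜 := ℝ) (n := Fin d) M
  have h2 : Matrix.toEuclideanCLM (𝕜 := ℝ) (n := Fin d) M x =
      Matrix.toEuclideanLin M x := by rw [← this]; rfl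
  rw [h2, Matrix.toEuclideanLin_apply]; rfl

lemma ray_eq (M : Matrix (Fin d) (Fin d) ℝ) (x : EuclideanSpace ℝ (Fin d)) :
    ⟪Matrix.toEuclideanCLM (𝕜 := ℝ) (n := Fin d) M x, x⟫ =
      (M *ᵥ (WithLp.equiv 2 (Fin d → ℝ) x)) ⬝ᵥ (WithLp.equiv 2 (Fin d → ℝ) x) := by
  rw [clm_apply]
  simp [PiLp.inner_apply, RCLike.inner_apply, dotProduct, mul_comm]

lemma norm_sq_eq (x : EuclideanSpace ℝ (Fin d)) :
    ‖x‖ ^ 2 = (WithLp.equiv 2 (Fin d → ℝ) x) ⬝ᵥ (WithLp.equiv 2 (Fin d → ℝ) x) := by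
  rw [← real_inner_self_eq_norm_sq]
  simp [PiLp.inner_apply, RCLike.inner_apply, dotProduct]
  rw [EuclideanSpace.norm_eq, Real.sq_sqrt (by positivity)]
  simp [Real.norm_eq_abs, sq_abs, sq]

lemma ray_abs_le (M : Matrix (Fin d) (Fin d) ℝ) (x : EuclideanSpace ℝ (Fin d)) :
    |⟪Matrix.toEuclideanCLM (𝕜 := ℝ) (n := Fin d) M x, x⟫| ≤
      ‖Matrix.toEuclideanCLM (𝕜 := ℝ) (n := Fin d) M‖ * ‖x‖ ^ 2 := by
  calc |⟪Matrix.toEuclideanCLM (𝕜 := ℝ) (n := Fin d) M x, x⟫|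
      ≤ ‖Matrix.toEuclideanCLM (𝕜 := ℝ) (n := Fin d) M x‖ * ‖x‖ := abs_real_inner_le_norm _ _
    _ ≤ (‖Matrix.toEuclideanCLM (𝕜 := ℝ) (n := Fin d) M‖ * ‖x‖) * ‖x‖ := by
        gcongr; exact (Matrix.toEuclideanCLM (𝕜 := ℝ) (n := Fin d) M).le_opNorm x
    _ = ‖Matrix.toEuclideanCLM (𝕜 := ℝ) (n := Fin d) M‖ * ‖x‖ ^ 2 := by ring

lemma ray_bddBelow (M : Matrix (Fin d) (Fin d) ℝ) :
    BddBelow (Set.range fun x : Metric.sphere (0 : EuclideanSpace ℝ (Fin d)) 1 =>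
      ⟪Matrix.toEuclideanCLM (𝕜 := ℝ) (n := Fin d) M (x : EuclideanSpace ℝ (Fin d)),
        (x : EuclideanSpace ℝ (Fin d))⟫) := by
  refine ⟨-‖Matrix.toEuclideanCLM (𝕜 := ℝ) (n := Fin d) M‖, ?_⟩
  rintro r ⟨x, rfl⟩
  have hx : ‖(x : EuclideanSpace ℝ (Fin d))‖ = 1 := by
    simp [mem_sphere_zero_iff_norm.mp x.2]
  have := ray_abs_le M (x : EuclideanSpace ℝ (Fin d))
  rw [hx] at this
  simp only [one_pow, mul_one] at this
  linarith [abs_le.mp this |>.1]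

lemma ray_bddAbove (M : Matrix (Fin d) (Fin d) ℝ) :
    BddAbove (Set.range fun x : Metric.sphere (0 : EuclideanSpace ℝ (Fin d)) 1 =>
      ⟪Matrix.toEuclideanCLM (𝕜 := ℝ) (n := Fin d) M (x : EuclideanSpace ℝ (Fin d)),
        (x : EuclideanSpace ℝ (Fin d))⟫) := by
  refine ⟨‖Matrix.toEuclideanCLM (𝕜 := ℝ) (n := Fin d) M‖, ?_⟩
  rintro r ⟨x, rfl⟩
  have hx : ‖(x : EuclideanSpace ℝ (Fin d))‖ = 1 := by
    simp [mem_sphere_zero_iff_norm.mp x.2]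
  have := ray_abs_le M (x : EuclideanSpace ℝ (Fin d))
  rw [hx] at this
  simp only [one_pow, mul_one] at this
  linarith [abs_le.mp this |>.2]

lemma ray_smul (M : Matrix (Fin d) (Fin d) ℝ) (u : EuclideanSpace ℝ (Fin d)) (c : ℝ) :
    ⟪Matrix.toEuclideanCLM (𝕜 := ℝ) (n := Fin d) M (c • u), c • u⟫ =
      c ^ 2 * ⟪Matrix.toEuclideanCLM (𝕜 := ℝ) (n := Fin d) M u, u⟫ := by
  rw [_root_.map_smul, real_inner_smul_left, real_inner_smul_right]; ring

lemma lambdaMin_le_ray (M : Matrix (Fin d) (Fin d) ℝ) (u : EuclideanSpace ℝ (Fin d)) :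
    lambdaMinR M * ‖u‖ ^ 2 ≤ ⟪Matrix.toEuclideanCLM (𝕜 := ℝ) (n := Fin d) M u, u⟫ := by
  rcases eq_or_ne u 0 with rfl | hu
  · simp
  · have hn : ‖u‖ ≠ 0 := norm_ne_zero_iff.mpr hu
    set x : EuclideanSpace ℝ (Fin d) := ‖u‖⁻¹ • u with hx
    have hxs : x ∈ Metric.sphere (0 : EuclideanSpace ℝ (Fin d)) 1 := by
      rw [mem_sphere_zero_iff_norm, hx, norm_smul]
      simp [abs_of_nonneg (norm_nonneg u), inv_mul_cancel₀ hn]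
    have h1 : lambdaMinR M ≤ ⟪Matrix.toEuclideanCLM (𝕜 := ℝ) (n := Fin d) M x, x⟫ := by
      unfold lambdaMinR
      exact ciInf_le (ray_bddBelow M) (⟨x, hxs⟩ : Metric.sphere (0 : EuclideanSpace ℝ (Fin d)) 1)
    have h2 := ray_smul M u (‖u‖⁻¹)
    rw [← hx] at h2
    have hpos : (0:ℝ) < ‖u‖ ^ 2 := by positivity
    have h3 : (‖u‖⁻¹) ^ 2 = (‖u‖ ^ 2)⁻¹ := by rw [inv_pow]
    rw [h2, h3] at h1
    calc lambdaMinR M * ‖u‖ ^ 2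
        ≤ ((‖u‖ ^ 2)⁻¹ * ⟪Matrix.toEuclideanCLM (𝕜 := ℝ) (n := Fin d) M u, u⟫) * ‖u‖ ^ 2 := by
          gcongr
      _ = ⟪Matrix.toEuclideanCLM (𝕜 := ℝ) (n := Fin d) M u, u⟫ := by field_simp

lemma ray_le_lambdaMax (M : Matrix (Fin d) (Fin d) ℝ) (u : EuclideanSpace ℝ (Fin d)) :
    ⟪Matrix.toEuclideanCLM (𝕜 := ℝ) (n := Fin d) M u, u⟫ ≤ lambdaMaxR M * ‖u‖ ^ 2 := by
  rcases eq_or_ne u 0 with rfl | hu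
  · simp
  · have hn : ‖u‖ ≠ 0 := norm_ne_zero_iff.mpr hu
    set x : EuclideanSpace ℝ (Fin d) := ‖u‖⁻¹ • u with hx
    have hxs : x ∈ Metric.sphere (0 : EuclideanSpace ℝ (Fin d)) 1 := by
      rw [mem_sphere_zero_iff_norm, hx, norm_smul]
      simp [abs_of_nonneg (norm_nonneg u), inv_mul_cancel₀ hn]
    have h1 : ⟪Matrix.toEuclideanCLM (𝕜 := ℝ) (n := Fin d) M x, x⟫ ≤ lambdaMaxR M := by
      unfold lambdaMaxR
      exact le_ciSup (ray_bddAbove M) (⟨x, hxs⟩ : Metric.sphere (0 : EuclideanSpace ℝ (Fin d)) 1)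
    have h2 := ray_smul M u (‖u‖⁻¹)
    rw [← hx] at h2
    have hpos : (0:ℝ) < ‖u‖ ^ 2 := by positivity
    have h3 : (‖u‖⁻¹) ^ 2 = (‖u‖ ^ 2)⁻¹ := by rw [inv_pow]
    rw [h2, h3] at h1
    calc ⟪Matrix.toEuclideanCLM (𝕜 := ℝ) (n := Fin d) M u, u⟫
        = ((‖u‖ ^ 2)⁻¹ * ⟪Matrix.toEuclideanCLM (𝕜 := ℝ) (n := Fin d) M u, u⟫) * ‖u‖ ^ 2 := by
          field_simp
      _ ≤ lambdaMaxR M * ‖u‖ ^ 2 := by gcongr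

lemma dot_self_nonneg' (u : Fin d → ℝ) : 0 ≤ u ⬝ᵥ u :=
  Finset.sum_nonneg fun i _ => mul_self_nonneg _

lemma qb_min (M : Matrix (Fin d) (Fin d) ℝ) {B : ℝ} (hB : lambdaMinR M ≥ B) (u : Fin d → ℝ) :
    B * (u ⬝ᵥ u) ≤ (M *ᵥ u) ⬝ᵥ u := by
  set U : EuclideanSpace ℝ (Fin d) := (WithLp.equiv 2 (Fin d → ℝ)).symm u with hU
  have hWu : (WithLp.equiv 2 (Fin d → ℝ)) U = u := by rw [hU]; exact Equiv.apply_symm_apply _ _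
  have h1 := lambdaMin_le_ray M U
  rw [ray_eq, norm_sq_eq, hWu] at h1
  have : B * (u ⬝ᵥ u) ≤ lambdaMinR M * (u ⬝ᵥ u) :=
    mul_le_mul_of_nonneg_right hB (dot_self_nonneg' u)
  linarith

lemma qb_max (M : Matrix (Fin d) (Fin d) ℝ) {D : ℝ} (hD : lambdaMaxR M ≤ D) (u : Fin d → ℝ) :
    (M *ᵥ u) ⬝ᵥ u ≤ D * (u ⬝ᵥ u) := by
  set U : EuclideanSpace ℝ (Fin d) := (WithLp.equiv 2 (Fin d → ℝ)).symm u with hU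
  have hWu : (WithLp.equiv 2 (Fin d → ℝ)) U = u := by rw [hU]; exact Equiv.apply_symm_apply _ _
  have h1 := ray_le_lambdaMax M U
  rw [ray_eq, norm_sq_eq, hWu] at h1
  have : lambdaMaxR M * (u ⬝ᵥ u) ≤ D * (u ⬝ᵥ u) :=
    mul_le_mul_of_nonneg_right hD (dot_self_nonneg' u)
  linarith

lemma qb_abs (M : Matrix (Fin d) (Fin d) ℝ) {C : ℝ} (hC : sigmaMaxR M ≤ C) (u : Fin d → ℝ) :
    |(M *ᵥ u) ⬝ᵥ u| ≤ C * (u ⬝ᵥ u) := by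
  set U : EuclideanSpace ℝ (Fin d) := (WithLp.equiv 2 (Fin d → ℝ)).symm u with hU
  have hWu : (WithLp.equiv 2 (Fin d → ℝ)) U = u := by rw [hU]; exact Equiv.apply_symm_apply _ _
  have h1 := ray_abs_le M U
  rw [ray_eq, norm_sq_eq, hWu] at h1
  have h2 : ‖Matrix.toEuclideanCLM (𝕜 := ℝ) (n := Fin d) M‖ * (u ⬝ᵥ u) ≤ C * (u ⬝ᵥ u) :=
    mul_le_mul_of_nonneg_right hC (dot_self_nonneg' u)
  exact h1.trans h2

lemma quad_sym (S : Matrix (Fin d) (Fin d) ℂ) (hS : Sᵀ = S) (z : Fin d → ℂ) :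
    star z ⬝ᵥ S *ᵥ z = ∑ i, ∑ j, S i j *
      ((((z i).re * (z j).re + (z i).im * (z j).im : ℝ)) : ℂ) := by
  have hS' : ∀ i j, S j i = S i j := fun i j => by
    conv_rhs => rw [← hS]
    rfl
  have key : ∀ i j : Fin d, conj (z i) * (S i j * z j) + conj (z j) * (S i j * z i) =
      2 * (S i j * ((((z i).re * (z j).re + (z i).im * (z j).im : ℝ)) : ℂ)) := by
    intro i j
    apply Complex.ext <;>
      simp [Complex.mul_re, Complex.mul_im, Complex.add_re, Complex.add_im] <;> ring
  have hA : star z ⬝ᵥ S *ᵥ z = ∑ i, ∑ j, conj (z i) * (S i j * z j) := by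
    simp [dotProduct, Matrix.mulVec, Finset.mul_sum, Pi.star_apply, RCLike.star_def]
  have hswap : (∑ i, ∑ j, conj (z i) * (S i j * z j)) =
      ∑ i, ∑ j, conj (z j) * (S i j * z i) := by
    rw [Finset.sum_comm]
    congr 1; funext i; congr 1; funext j
    rw [hS' i j]
  have h2 : (2:ℂ) * (star z ⬝ᵥ S *ᵥ z) =
      2 * ∑ i, ∑ j, S i j * ((((z i).re * (z j).re + (z i).im * (z j).im : ℝ)) : ℂ) := by
    calc (2:ℂ) * (star z ⬝ᵥ S *ᵥ z)
        = (∑ i, ∑ j, conj (z i) * (S i j * z j)) + ∑ i, ∑ j, conj (z j) * (S i j * z i) := by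
          rw [hA, two_mul]
          nth_rewrite 2 [hswap]
          rfl
      _ = ∑ i, ∑ j, (conj (z i) * (S i j * z j) + conj (z j) * (S i j * z i)) := by
          rw [← Finset.sum_add_distrib]
          congr 1; funext i
          rw [← Finset.sum_add_distrib]
      _ = ∑ i, ∑ j, 2 * (S i j * ((((z i).re * (z j).re + (z i).im * (z j).im : ℝ)) : ℂ)) := by
          congr 1; funext i; congr 1; funext j; exact key i j
      _ = 2 * ∑ i, ∑ j, S i j * ((((z i).re * (z j).re + (z i).im * (z j).im : ℝ)) : ℂ) := by
          rw [Finset.mul_sum]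
          congr 1; funext i
          rw [Finset.mul_sum]
  exact mul_left_cancel₀ (two_ne_zero' ℂ) h2

lemma quad_re (S : Matrix (Fin d) (Fin d) ℂ) (hS : Sᵀ = S) (z : Fin d → ℂ) :
    (star z ⬝ᵥ S *ᵥ z).re =
      ((S.map Complex.re) *ᵥ (fun i => (z i).re)) ⬝ᵥ (fun i => (z i).re) +
      ((S.map Complex.re) *ᵥ (fun i => (z i).im)) ⬝ᵥ (fun i => (z i).im) := by
  rw [quad_sym S hS z]
  rw [Complex.re_sum]
  simp only [Complex.re_sum, Complex.mul_re, Complex.ofReal_re, Complex.ofReal_im,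
    mul_zero, sub_zero, dotProduct, Matrix.mulVec, Matrix.map_apply]
  rw [← Finset.sum_add_distrib]
  congr 1; funext i
  simp only [dotProduct, Finset.sum_mul]
  rw [← Finset.sum_add_distrib]
  congr 1; funext j
  ring

lemma quad_im (S : Matrix (Fin d) (Fin d) ℂ) (hS : Sᵀ = S) (z : Fin d → ℂ) :
    (star z ⬝ᵥ S *ᵥ z).im =
      ((S.map Complex.im) *ᵥ (fun i => (z i).re)) ⬝ᵥ (fun i => (z i).re) +
      ((S.map Complex.im) *ᵥ (fun i => (z i).im)) ⬝ᵥ (fun i => (z i).im) := by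
  rw [quad_sym S hS z]
  rw [Complex.im_sum]
  simp only [Complex.im_sum, Complex.mul_im, Complex.ofReal_re, Complex.ofReal_im,
    mul_zero, add_zero, dotProduct, Matrix.mulVec, Matrix.map_apply]
  rw [← Finset.sum_add_distrib]
  congr 1; funext i
  simp only [dotProduct, Finset.sum_mul]
  rw [← Finset.sum_add_distrib]
  congr 1; funext j
  ring

section alg
variable (G Q : Matrix (Fin d) (Fin d) ℂ) (α : Fin d → ℝ) (hQ : IsUnit Q)
  (hdec : G = Q * (1 + Complex.I • Matrix.diagonal (fun k => (α k : ℂ))) * Qᴴ)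

lemma beta_ne (k : Fin d) : (1 + Complex.I * (α k : ℂ)) ≠ 0 := by
  intro h
  have := congrArg Complex.re h
  simp [Complex.add_re, Complex.mul_re] at this

lemma E_eq : (1 : Matrix (Fin d) (Fin d) ℂ) + Complex.I • Matrix.diagonal (fun k => (α k : ℂ)) =
    Matrix.diagonal (fun k => 1 + Complex.I * (α k : ℂ)) := by
  ext i j
  by_cases h : i = j <;> simp [Matrix.diagonal, Matrix.one_apply, h]

include hQ hdec in
lemma Ginv_eq : G⁻¹ = Qᴴ⁻¹ * Matrix.diagonal (fun k => (1 + Complex.I * (α k : ℂ))⁻¹) * Q⁻¹ := by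
  have hdet : IsUnit Q.det := (Matrix.isUnit_iff_isUnit_det Q).mp hQ
  have hdetH : IsUnit Qᴴ.det := by
    rw [Matrix.det_conjTranspose]
    exact hdet.star
  apply Matrix.inv_eq_right_inv
  rw [hdec, E_eq]
  calc Q * Matrix.diagonal (fun k => 1 + Complex.I * (α k : ℂ)) * Qᴴ *
        (Qᴴ⁻¹ * Matrix.diagonal (fun k => (1 + Complex.I * (α k : ℂ))⁻¹) * Q⁻¹)
      = Q * Matrix.diagonal (fun k => 1 + Complex.I * (α k : ℂ)) * (Qᴴ * Qᴴ⁻¹) *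
          Matrix.diagonal (fun k => (1 + Complex.I * (α k : ℂ))⁻¹) * Q⁻¹ := by
        noncomm_ring
    _ = Q * (Matrix.diagonal (fun k => 1 + Complex.I * (α k : ℂ)) *
          Matrix.diagonal (fun k => (1 + Complex.I * (α k : ℂ))⁻¹)) * Q⁻¹ := by
        rw [Matrix.mul_nonsing_inv _ hdetH]
        noncomm_ring
    _ = 1 := by
        rw [Matrix.diagonal_mul_diagonal]
        have : (fun i => (1 + Complex.I * (α i : ℂ)) * (1 + Complex.I * (α i : ℂ))⁻¹) =
            fun _ => (1:ℂ) := by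
          funext i; exact mul_inv_cancel₀ (beta_ne α i)
        rw [this, Matrix.diagonal_one, Matrix.mul_one, Matrix.mul_nonsing_inv _ hdet]

lemma dot_shift (A : Matrix (Fin d) (Fin d) ℂ) (v w : Fin d → ℂ) :
    star v ⬝ᵥ (A *ᵥ w) = star (Aᴴ *ᵥ v) ⬝ᵥ w := by
  rw [Matrix.star_mulVec, Matrix.conjTranspose_conjTranspose, Matrix.dotProduct_mulVec]

include hQ hdec in
lemma key1 (c : Fin d → ℂ) :
    star (Q *ᵥ c) ⬝ᵥ (G⁻¹ *ᵥ (Q *ᵥ c)) =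
      ∑ k, (1 + Complex.I * (α k : ℂ))⁻¹ * (Complex.normSq (c k) : ℂ) := by
  have hdet : IsUnit Q.det := (Matrix.isUnit_iff_isUnit_det Q).mp hQ
  rw [Ginv_eq G Q α hQ hdec]
  rw [Matrix.mulVec_mulVec]
  have hm : Qᴴ⁻¹ * Matrix.diagonal (fun k => (1 + Complex.I * (α k : ℂ))⁻¹) * Q⁻¹ * Q =
      Qᴴ⁻¹ * Matrix.diagonal (fun k => (1 + Complex.I * (α k : ℂ))⁻¹) := by
    rw [Matrix.mul_assoc _ _ Q, Matrix.nonsing_inv_mul _ hdet, Matrix.mul_one]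
  rw [hm, ← Matrix.mulVec_mulVec, dot_shift, Matrix.conjTranspose_nonsing_inv,
    Matrix.conjTranspose_conjTranspose, Matrix.mulVec_mulVec, Matrix.nonsing_inv_mul _ hdet,
    Matrix.one_mulVec]
  simp only [dotProduct, Pi.star_apply, Matrix.mulVec_diagonal]
  congr 1; funext k
  rw [Complex.normSq_eq_conj_mul_self]
  simp only [RCLike.star_def]
  ring

include hdec in
lemma key2 (x : Fin d → ℂ) :
    star x ⬝ᵥ (G *ᵥ x) =
      ∑ k, (1 + Complex.I * (α k : ℂ)) * (Complex.normSq ((Qᴴ *ᵥ x) k) : ℂ) := by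
  rw [hdec, E_eq]
  have hv : (Q * Matrix.diagonal (fun k => 1 + Complex.I * (α k : ℂ)) * Qᴴ) *ᵥ x =
      Q *ᵥ (Matrix.diagonal (fun k => 1 + Complex.I * (α k : ℂ)) *ᵥ (Qᴴ *ᵥ x)) := by
    rw [Matrix.mulVec_mulVec, Matrix.mulVec_mulVec]
  rw [hv, dot_shift]
  simp only [dotProduct, Pi.star_apply, Matrix.mulVec_diagonal]
  congr 1; funext k
  rw [Complex.normSq_eq_conj_mul_self]
  simp only [RCLike.star_def]
  ring

end alg

end LambdaMinAux

set_option maxHeartbeats 2000000 in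
theorem lambdaMin_re_G_lower_bound {d : ℕ} (G Q : Matrix (Fin d) (Fin d) ℂ)
    (α : Fin d → ℝ) (hQ : IsUnit Q) (hGsymm : Gᵀ = G)
    (hdec : G = Q * (1 + Complex.I • Matrix.diagonal (fun k => (α k : ℂ))) * Qᴴ)
    (B C D : ℝ) (hB0 : 0 < B)
    (hB : lambdaMinR (G⁻¹.map Complex.re) ≥ B)
    (hC : sigmaMaxR (G⁻¹.map Complex.im) ≤ C)
    (hD : lambdaMaxR (G⁻¹.map Complex.re) ≤ D) :
    lambdaMinR (G.map Complex.re) ≥ 1 / ((1 + (C / B) ^ 2) * D) ∧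
    0 < 1 / ((1 + (C / B) ^ 2) * D) := by
  classical
  open LambdaMinAux in
  have hdet : IsUnit Q.det := (Matrix.isUnit_iff_isUnit_det Q).mp hQ
  have hC0 : 0 ≤ C := le_trans (norm_nonneg _) hC
  set K : ℝ := 1 + (C / B) ^ 2 with hK
  have hK1 : (1:ℝ) ≤ K := by rw [hK]; nlinarith [sq_nonneg (C / B)]
  rcases Nat.eq_zero_or_pos d with hd0 | hd
  · exfalso
    subst hd0
    haveI : IsEmpty (Metric.sphere (0 : EuclideanSpace ℝ (Fin 0)) 1) := by
      constructor
      intro x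
      have hx := mem_sphere_zero_iff_norm.mp x.2
      have h0 : (x : EuclideanSpace ℝ (Fin 0)) = 0 := Subsingleton.elim _ _
      rw [h0] at hx
      simp at hx
    have hz : lambdaMinR ((G⁻¹).map Complex.re) = 0 := by
      unfold lambdaMinR
      exact Real.iInf_of_isEmpty _
    rw [hz] at hB
    linarith
  have hGinvT : (G⁻¹)ᵀ = G⁻¹ := by rw [Matrix.transpose_nonsing_inv, hGsymm]
  have hβre : ∀ k, ((1 + Complex.I * (α k : ℂ))).re = 1 := by intro k; simp
  have hβim : ∀ k, ((1 + Complex.I * (α k : ℂ))).im = α k := by intro k; simp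
  have hβnormSq : ∀ k, Complex.normSq (1 + Complex.I * (α k : ℂ)) = 1 + α k ^ 2 := by
    intro k; rw [Complex.normSq_apply, hβre, hβim]; ring
  have hβinv_re : ∀ k, ((1 + Complex.I * (α k : ℂ))⁻¹).re = 1 / (1 + α k ^ 2) := by
    intro k; rw [Complex.inv_re, hβre, hβnormSq]
  have hβinv_im : ∀ k, ((1 + Complex.I * (α k : ℂ))⁻¹).im = -(α k) / (1 + α k ^ 2) := by
    intro k; rw [Complex.inv_im, hβim, hβnormSq]
  -- bound on the alphas
  have halpha : ∀ k, |α k| ≤ C / B := by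
    intro k
    have hP : (0:ℝ) < 1 + α k ^ 2 := by positivity
    set z : Fin d → ℂ := Q *ᵥ (Pi.single k 1) with hz
    have hkey := LambdaMinAux.key1 G Q α hQ hdec (Pi.single k 1)
    have hsum : (∑ k', (1 + Complex.I * (α k' : ℂ))⁻¹ *
        (Complex.normSq ((Pi.single k 1 : Fin d → ℂ) k') : ℂ)) =
        (1 + Complex.I * (α k : ℂ))⁻¹ := by
      rw [Finset.sum_eq_single k]
      · simp
      · intro b _ hb; simp [Pi.single_apply, hb]
      · intro h; simp at h
    rw [hsum] at hkey
    set u : Fin d → ℝ := fun i => (z i).re with hu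
    set v : Fin d → ℝ := fun i => (z i).im with hv
    have hre := LambdaMinAux.quad_re (G⁻¹) hGinvT z
    have him := LambdaMinAux.quad_im (G⁻¹) hGinvT z
    rw [hkey, hβinv_re k] at hre
    rw [hkey, hβinv_im k] at him
    rw [← hu, ← hv] at hre him
    set n : ℝ := u ⬝ᵥ u + v ⬝ᵥ v with hn
    have h1 : B * n ≤ 1 / (1 + α k ^ 2) := by
      have a1 := LambdaMinAux.qb_min _ hB u
      have a2 := LambdaMinAux.qb_min _ hB v
      calc B * n = B * (u ⬝ᵥ u) + B * (v ⬝ᵥ v) := by rw [hn]; ring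
        _ ≤ ((G⁻¹.map Complex.re) *ᵥ u) ⬝ᵥ u + ((G⁻¹.map Complex.re) *ᵥ v) ⬝ᵥ v :=
            add_le_add a1 a2
        _ = 1 / (1 + α k ^ 2) := hre.symm
    have h2 : |α k| / (1 + α k ^ 2) ≤ C * n := by
      have a1 := LambdaMinAux.qb_abs _ hC u
      have a2 := LambdaMinAux.qb_abs _ hC v
      calc |α k| / (1 + α k ^ 2) = |(-(α k)) / (1 + α k ^ 2)| := by
            rw [abs_div, abs_neg, abs_of_pos hP]
        _ = |((G⁻¹.map Complex.im) *ᵥ u) ⬝ᵥ u + ((G⁻¹.map Complex.im) *ᵥ v) ⬝ᵥ v| := by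
            rw [him]
        _ ≤ |((G⁻¹.map Complex.im) *ᵥ u) ⬝ᵥ u| + |((G⁻¹.map Complex.im) *ᵥ v) ⬝ᵥ v| :=
            abs_add_le _ _
        _ ≤ C * (u ⬝ᵥ u) + C * (v ⬝ᵥ v) := add_le_add a1 a2
        _ = C * n := by rw [hn]; ring
    have h1' : B * n * (1 + α k ^ 2) ≤ 1 := (le_div_iff₀ hP).mp h1
    have h2' : |α k| ≤ C * n * (1 + α k ^ 2) := (div_le_iff₀ hP).mp h2
    rw [le_div_iff₀ hB0]
    nlinarith [mul_le_mul_of_nonneg_left h1' hC0, h2', hB0.le]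
  have hα2 : ∀ k, α k ^ 2 ≤ (C / B) ^ 2 := by
    intro k
    have := halpha k
    nlinarith [abs_nonneg (α k), sq_abs (α k)]
  -- nonempty sphere
  have x0 : Metric.sphere (0 : EuclideanSpace ℝ (Fin d)) 1 := by
    refine ⟨EuclideanSpace.single ⟨0, hd⟩ (1:ℝ), ?_⟩
    rw [mem_sphere_zero_iff_norm, EuclideanSpace.norm_single]
    norm_num
  haveI hne : Nonempty (Metric.sphere (0 : EuclideanSpace ℝ (Fin d)) 1) := ⟨x0⟩
  have hBD : B ≤ D := by
    have l1 : lambdaMinR (G⁻¹.map Complex.re) ≤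
        ⟪Matrix.toEuclideanCLM (𝕜 := ℝ) (n := Fin d) (G⁻¹.map Complex.re)
          (x0 : EuclideanSpace ℝ (Fin d)), (x0 : EuclideanSpace ℝ (Fin d))⟫ :=
      ciInf_le (LambdaMinAux.ray_bddBelow _) x0
    have l2 : ⟪Matrix.toEuclideanCLM (𝕜 := ℝ) (n := Fin d) (G⁻¹.map Complex.re)
          (x0 : EuclideanSpace ℝ (Fin d)), (x0 : EuclideanSpace ℝ (Fin d))⟫ ≤
        lambdaMaxR (G⁻¹.map Complex.re) :=
      le_ciSup (LambdaMinAux.ray_bddAbove _) x0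
    linarith
  have hD0 : 0 < D := lt_of_lt_of_le hB0 hBD
  have hK0 : 0 < K := lt_of_lt_of_le one_pos hK1
  have hKD : 0 < K * D := mul_pos hK0 hD0
  refine ⟨?_, by positivity⟩
  rw [ge_iff_le]
  unfold lambdaMinR
  apply le_ciInf
  rintro ⟨x, hxs⟩
  have hx1 : ‖x‖ = 1 := by simpa using mem_sphere_zero_iff_norm.mp hxs
  set xv : Fin d → ℝ := WithLp.equiv 2 (Fin d → ℝ) x with hxv
  have hxdot : xv ⬝ᵥ xv = 1 := by
    have h := LambdaMinAux.norm_sq_eq x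
    rw [hx1, ← hxv] at h
    simpa using h.symm
  set xc : Fin d → ℂ := fun i => (xv i : ℂ) with hxc
  have hxcre : (fun i => (xc i).re) = xv := by funext i; simp [hxc]
  have hxcim : (fun i => (xc i).im) = (fun _ => (0:ℝ)) := by funext i; simp [hxc]
  have hzero : ∀ (M : Matrix (Fin d) (Fin d) ℝ),
      (M *ᵥ (fun _ => (0:ℝ))) ⬝ᵥ (fun _ => (0:ℝ)) = 0 := by
    intro M; simp [dotProduct]
  have hGq := LambdaMinAux.quad_re G hGsymm xc
  rw [hxcre, hxcim, hzero, add_zero] at hGq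
  have hGiq := LambdaMinAux.quad_re (G⁻¹) hGinvT xc
  rw [hxcre, hxcim, hzero, add_zero] at hGiq
  set p : Fin d → ℂ := Qᴴ *ᵥ xc with hp
  set y : Fin d → ℂ := Q⁻¹ *ᵥ xc with hy
  have hxrec : Q *ᵥ y = xc := by
    rw [hy, Matrix.mulVec_mulVec, Matrix.mul_nonsing_inv _ hdet, Matrix.one_mulVec]
  have hk2 := LambdaMinAux.key2 G Q α hdec xc
  have hSp : (star xc ⬝ᵥ (G *ᵥ xc)).re = ∑ k, Complex.normSq (p k) := by
    rw [hk2, Complex.re_sum]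
    congr 1; funext k
    rw [Complex.mul_re]
    simp [hβre k, hβim k]
    rfl
  have hk1 := LambdaMinAux.key1 G Q α hQ hdec y
  rw [hxrec] at hk1
  have hT : (star xc ⬝ᵥ (G⁻¹ *ᵥ xc)).re = ∑ k, Complex.normSq (y k) / (1 + α k ^ 2) := by
    rw [hk1, Complex.re_sum]
    congr 1; funext k
    rw [Complex.mul_re]
    simp only [Complex.ofReal_re, Complex.ofReal_im, mul_zero, sub_zero]
    rw [hβinv_re k]
    ring
  have hTD : (∑ k, Complex.normSq (y k) / (1 + α k ^ 2)) ≤ D := by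
    calc (∑ k, Complex.normSq (y k) / (1 + α k ^ 2))
        = ((G⁻¹.map Complex.re) *ᵥ xv) ⬝ᵥ xv := by rw [← hT, hGiq]
      _ ≤ D * (xv ⬝ᵥ xv) := LambdaMinAux.qb_max _ hD xv
      _ = D := by rw [hxdot, mul_one]
  have hTnn : 0 ≤ ∑ k, Complex.normSq (y k) / (1 + α k ^ 2) := by
    apply Finset.sum_nonneg
    intro k _
    have hPk : (0:ℝ) < 1 + α k ^ 2 := by positivity
    exact div_nonneg (Complex.normSq_nonneg _) hPk.le
  have hSy : (∑ k, Complex.normSq (y k)) ≤ K * D := by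
    have step : (∑ k, Complex.normSq (y k)) ≤
        ∑ k, K * (Complex.normSq (y k) / (1 + α k ^ 2)) := by
      apply Finset.sum_le_sum
      intro k _
      have hPk : (0:ℝ) < 1 + α k ^ 2 := by positivity
      have hKP : 1 + α k ^ 2 ≤ K := by rw [hK]; linarith [hα2 k]
      have h0 : 0 ≤ Complex.normSq (y k) := Complex.normSq_nonneg _
      have h0' : 0 ≤ Complex.normSq (y k) / (1 + α k ^ 2) := by positivity
      calc Complex.normSq (y k) = Complex.normSq (y k) / (1 + α k ^ 2) * (1 + α k ^ 2) := by
            field_simp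
        _ ≤ Complex.normSq (y k) / (1 + α k ^ 2) * K := by gcongr
        _ = K * (Complex.normSq (y k) / (1 + α k ^ 2)) := by ring
    calc (∑ k, Complex.normSq (y k))
        ≤ ∑ k, K * (Complex.normSq (y k) / (1 + α k ^ 2)) := step
      _ = K * ∑ k, Complex.normSq (y k) / (1 + α k ^ 2) := by rw [Finset.mul_sum]
      _ ≤ K * D := by gcongr
  have hyp1 : star y ⬝ᵥ p = 1 := by
    rw [hp, LambdaMinAux.dot_shift, Matrix.conjTranspose_conjTranspose, hxrec]
    have hs : star xc ⬝ᵥ xc = ((xv ⬝ᵥ xv : ℝ) : ℂ) := by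
      simp only [dotProduct, hxc, Pi.star_apply, Complex.star_def, Complex.conj_ofReal]
      push_cast
      ring
    rw [hs, hxdot]
    norm_num
  have hcs : 1 ≤ (∑ k, Complex.normSq (y k)) * (∑ k, Complex.normSq (p k)) := by
    have habs : (1:ℝ) ≤ ∑ k, ‖y k‖ * ‖p k‖ := by
      calc (1:ℝ) = ‖star y ⬝ᵥ p‖ := by rw [hyp1, norm_one]
        _ = ‖∑ k, star y k * p k‖ := rfl
        _ ≤ ∑ k, ‖star y k * p k‖ := norm_sum_le _ _
        _ = ∑ k, ‖y k‖ * ‖p k‖ := by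
            congr 1; funext k
            simp only [Pi.star_apply, norm_mul, norm_star]
    have hsq := Finset.sum_mul_sq_le_sq_mul_sq Finset.univ
      (fun k => ‖y k‖) (fun k => ‖p k‖)
    have hy2 : (∑ k, ‖y k‖ ^ 2) = ∑ k, Complex.normSq (y k) := by
      congr 1; funext k
      rw [← Complex.sq_norm]
    have hp2 : (∑ k, ‖p k‖ ^ 2) = ∑ k, Complex.normSq (p k) := by
      congr 1; funext k
      rw [← Complex.sq_norm]
    have h1 : (1:ℝ) ≤ (∑ k, ‖y k‖ * ‖p k‖) ^ 2 := by nlinarith [habs]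
    rw [hy2, hp2] at hsq
    linarith
  have hpnn : 0 ≤ ∑ k, Complex.normSq (p k) :=
    Finset.sum_nonneg fun k _ => Complex.normSq_nonneg _
  have hSpb : 1 / (K * D) ≤ ∑ k, Complex.normSq (p k) := by
    have h1 : 1 ≤ (K * D) * (∑ k, Complex.normSq (p k)) :=
      le_trans hcs (mul_le_mul_of_nonneg_right hSy hpnn)
    rw [div_le_iff₀ hKD]
    linarith
  calc 1 / (K * D) ≤ ∑ k, Complex.normSq (p k) := hSpb
    _ = (star xc ⬝ᵥ (G *ᵥ xc)).re := hSp.symm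
    _ = ((G.map Complex.re) *ᵥ xv) ⬝ᵥ xv := hGq
    _ = ⟪Matrix.toEuclideanCLM (𝕜 := ℝ) (n := Fin d) (G.map Complex.re) x, x⟫ :=
        (LambdaMinAux.ray_eq _ x).symm
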